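/- If (C1, h1, e1) ⇒ (C2, h2, e2) is a step of the small-step semantics with memoization and sharing, then: (1) [ℓ]_{h2} = [ℓ]_{h1} for every location ℓ of h1; and (2) the unfoldings are preserved, i.e. [C1]_{h2} = [C1]_{h1} and [e1]_{h2} = [e1]_{h1}. -/

import Mathlib

namespace Memo

/-! ### Terms over a program signature -/

/-- Terms over operation symbols `Op`, constructors `Con` and variables `V`. -/
inductive Tm (Op Con V : Type) : Type
  | var : V → Tm Op Con V
  | op  : Op → List (Tm Op Con V) → Tm Op Con V
  | con : Con → List (Tm Op Con V) → Tm Op Con V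

namespace Tm
variable {Op Con V : Type}

/-- Substitution. -/
def subst (σ : V → Tm Op Con V) : Tm Op Con V → Tm Op Con V
  | .var x => σ x
  | .op f ts => .op f (ts.attach.map fun t => subst σ t.1)
  | .con c ts => .con c (ts.attach.map fun t => subst σ t.1)
decreasing_by
  all_goals simp_wf
  all_goals (have := List.sizeOf_lt_of_mem t.2; omega)

/-- The size `|t|` of a term (number of symbols). -/
def size : Tm Op Con V → ℕ
  | .var _ => 1
  | .op _ ts => 1 + (ts.attach.map fun t => size t.1).sum
  | .con _ ts => 1 + (ts.attach.map fun t => size t.1).sum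
decreasing_by
  all_goals simp_wf
  all_goals (have := List.sizeOf_lt_of_mem t.2; omega)

/-- Number of occurrences of the variable `x` in a term. -/
def varCount [DecidableEq V] (x : V) : Tm Op Con V → ℕ
  | .var y => if y = x then 1 else 0
  | .op _ ts => (ts.attach.map fun t => varCount x t.1).sum
  | .con _ ts => (ts.attach.map fun t => varCount x t.1).sum
decreasing_by
  all_goals simp_wf
  all_goals (have := List.sizeOf_lt_of_mem t.2; omega)

end Tm

/-- Values: ground constructor terms. -/
inductive IsValue {Op Con V : Type} : Tm Op Con V → Prop
  | con {c : Con} {ts} : (∀ t ∈ ts, IsValue t) → IsValue (.con c ts)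

/-- Ground terms: terms without variables. -/
inductive Ground {Op Con V : Type} : Tm Op Con V → Prop
  | op {f : Op} {ts} : (∀ t ∈ ts, Ground t) → Ground (.op f ts)
  | con {c : Con} {ts} : (∀ t ∈ ts, Ground t) → Ground (.con c ts)

/-- Patterns: terms built from constructors and variables only. -/
inductive IsPattern {Op Con V : Type} : Tm Op Con V → Prop
  | var (x : V) : IsPattern (.var x)
  | con {c : Con} {ts} : (∀ t ∈ ts, IsPattern t) → IsPattern (.con c ts)

/-- The variable `x` occurs in the given term. -/
inductive VarIn {Op Con V : Type} (x : V) : Tm Op Con V → Prop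
  | var : VarIn x (.var x)
  | op {f : Op} {ts t} : t ∈ ts → VarIn x t → VarIn x (.op f ts)
  | con {c : Con} {ts t} : t ∈ ts → VarIn x t → VarIn x (.con c ts)

/-! ### Programs -/

/-- A rewrite rule `f(p₁,…,pₖ) → r`. -/
structure Rule (Op Con V : Type) where
  lhsOp : Op
  lhsArgs : List (Tm Op Con V)
  rhs : Tm Op Con V

/-- A program: a finite set (list) of rewrite rules. -/
structure Prog (Op Con V : Type) where
  rules : List (Rule Op Con V)

/-- Well-formed rule: left-hand side arguments are patterns and all variables of the
right-hand side occur in the left-hand side. -/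
def WFRule {Op Con V : Type} (r : Rule Op Con V) : Prop :=
  (∀ p ∈ r.lhsArgs, IsPattern p) ∧
  (∀ x, VarIn x r.rhs → ∃ p ∈ r.lhsArgs, VarIn x p)

/-- Left-linearity: every variable occurs at most once in the left-hand side. -/
def LeftLinear {Op Con V : Type} [DecidableEq V] (r : Rule Op Con V) : Prop :=
  ∀ x : V, (r.lhsArgs.map (Tm.varCount x)).sum ≤ 1

/-- Non-ambiguity: no two rules have overlapping left-hand sides. -/
def NonAmbiguous {Op Con V : Type} (P : Prog Op Con V) : Prop :=
  ∀ r1 ∈ P.rules, ∀ r2 ∈ P.rules, r1.lhsOp = r2.lhsOp →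
    ∀ σ1 σ2 : V → Tm Op Con V,
      r1.lhsArgs.map (Tm.subst σ1) = r2.lhsArgs.map (Tm.subst σ2) → r1 = r2

/-- Orthogonal program: well-formed, left-linear and non-ambiguous. -/
def Orthogonal {Op Con V : Type} [DecidableEq V] (P : Prog Op Con V) : Prop :=
  (∀ r ∈ P.rules, WFRule r ∧ LeftLinear r) ∧ NonAmbiguous P

/-! ### Standard call-by-value big-step semantics (Figure 3) -/

mutual
/-- `Eval P t v`: the term `t` reduces to the value `v`. -/
inductive Eval {Op Con V : Type} (P : Prog Op Con V) : Tm Op Con V → Tm Op Con V → Prop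
  | con {c : Con} {ts vs} : EvalList P ts vs → Eval P (.con c ts) (.con c vs)
  | split {f : Op} {ts vs v} : EvalList P ts vs → Eval P (.op f vs) v →
      Eval P (.op f ts) v
  | apply {f : Op} {vs r σ v} : (∀ u ∈ vs, IsValue u) → r ∈ P.rules → r.lhsOp = f →
      vs = r.lhsArgs.map (Tm.subst σ) → Eval P (Tm.subst σ r.rhs) v →
      Eval P (.op f vs) v

/-- Left-to-right evaluation of a list of terms. -/
inductive EvalList {Op Con V : Type} (P : Prog Op Con V) :
    List (Tm Op Con V) → List (Tm Op Con V) → Prop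
  | nil : EvalList P [] []
  | cons {t v ts vs} : Eval P t v → EvalList P ts vs → EvalList P (t :: ts) (v :: vs)
end

/-! ### Cost-annotated big-step semantics with memoization (Figure 4) -/

/-- A cache: a set of pairs of a function call on values and its result value. -/
abbrev TCache (Op Con V : Type) := Set (Op × List (Tm Op Con V) × Tm Op Con V)

mutual
/-- `MEval P C₀ t m C₁ v`: starting with cache `C₀` the term `t` reduces to the value `v`
with updated cache `C₁` at cost `m` (number of non-tabulated function applications). -/
inductive MEval {Op Con V : Type} (P : Prog Op Con V) :
    TCache Op Con V → Tm Op Con V → ℕ → TCache Op Con V → Tm Op Con V → Prop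
  | con {C0 C1 : TCache Op Con V} {c : Con} {ts m vs} :
      MEvalList P C0 ts m C1 vs →
      MEval P C0 (.con c ts) m C1 (.con c vs)
  | split {C0 C1 C2 : TCache Op Con V} {f : Op} {ts m vs n v} :
      MEvalList P C0 ts m C1 vs →
      MEval P C1 (.op f vs) n C2 v →
      MEval P C0 (.op f ts) (n + m) C2 v
  | read {C : TCache Op Con V} {f : Op} {vs v} :
      (∀ u ∈ vs, IsValue u) → (f, vs, v) ∈ C →
      MEval P C (.op f vs) 0 C v
  | update {C C' : TCache Op Con V} {f : Op} {vs r σ m v} :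
      (∀ u ∈ vs, IsValue u) → (∀ u, (f, vs, u) ∉ C) →
      r ∈ P.rules → r.lhsOp = f → vs = r.lhsArgs.map (Tm.subst σ) →
      MEval P C (Tm.subst σ r.rhs) m C' v →
      MEval P C (.op f vs) (m + 1) (insert (f, vs, v) C') v

/-- Left-to-right evaluation of a list of terms, threading the cache and summing costs. -/
inductive MEvalList {Op Con V : Type} (P : Prog Op Con V) :
    TCache Op Con V → List (Tm Op Con V) → ℕ → TCache Op Con V → List (Tm Op Con V) → Prop
  | nil {C : TCache Op Con V} : MEvalList P C [] 0 C []
  | cons {C0 C1 C2 : TCache Op Con V} {t m v ts n vs} :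
      MEval P C0 t m C1 v → MEvalList P C1 ts n C2 vs →
      MEvalList P C0 (t :: ts) (m + n) C2 (v :: vs)
end

/-! ### Heaps -/

/-- Locations. -/
abbrev Loc := ℕ

/-- A heap: a (partial) map from locations to constructors applied to locations,
i.e. a term graph over the constructors whose nodes are locations. -/
abbrev Heap (Con : Type) := Loc → Option (Con × List Loc)

/-- Domain (set of nodes) of a heap. -/
def heapDom {Con : Type} (h : Heap Con) : Set Loc := {l | h l ≠ none}

/-- A heap is maximally shared if equally labeled locations coincide. -/
def MaxShared {Con : Type} (h : Heap Con) : Prop :=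
  ∀ l1 l2 c ls, h l1 = some (c, ls) → h l2 = some (c, ls) → l1 = l2

/-- All successors of heap nodes are again heap nodes. -/
def HeapClosed {Con : Type} (h : Heap Con) : Prop :=
  ∀ l c ls, h l = some (c, ls) → ∀ l' ∈ ls, l' ∈ heapDom h

/-- `HUnfolds h l v`: the value `v` is stored at location `l`, i.e. `v = [l]_h` is
obtained by unfolding the heap `h` starting from location `l`. -/
inductive HUnfolds {Op Con V : Type} (h : Heap Con) : Loc → Tm Op Con V → Prop
  | mk {l : Loc} {c ls ts} : h l = some (c, ls) → ls.length = ts.length →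
      (∀ (i : ℕ) l' t, ls[i]? = some l' → ts[i]? = some t → HUnfolds h l' t) →
      HUnfolds h l (.con c ts)

/-- `merge(h, c(ℓ⃗)) = (h', ℓ)`: extension of the heap `h` by `c(ℓ⃗)` retaining maximal
sharing; an existing location is reused if possible, otherwise the first fresh location
is used. -/
inductive Merge {Con : Type} (h : Heap Con) (c : Con) (ls : List Loc) : Heap Con → Loc → Prop
  | reuse {l : Loc} : h l = some (c, ls) → Merge h c ls h l
  | fresh {l : Loc} : (∀ l', h l' ≠ some (c, ls)) → h l = none →
      (∀ l' < l, h l' ≠ none) →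
      Merge h c ls (Function.update h l (some (c, ls))) l

/-! ### Expressions, evaluation contexts and configurations -/

/-- Expressions: terms extended with locations and markers `f⟨ℓ⃗⟩{e}`. -/
inductive Expr (Op Con : Type) : Type
  | loc : Loc → Expr Op Con
  | op : Op → List (Expr Op Con) → Expr Op Con
  | con : Con → List (Expr Op Con) → Expr Op Con
  | marked : Op → List Loc → Expr Op Con → Expr Op Con

/-- Value expressions: built from constructors and locations only. -/
inductive IsValExpr {Op Con : Type} : Expr Op Con → Prop
  | loc (l : Loc) : IsValExpr (.loc l)
  | con {c : Con} {es} : (∀ e ∈ es, IsValExpr e) → IsValExpr (.con c es)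

/-- Evaluation contexts: a unique hole, with only locations to the left of the hole. -/
inductive Ctx (Op Con : Type) : Type
  | hole : Ctx Op Con
  | marked : Op → List Loc → Ctx Op Con → Ctx Op Con
  | op : Op → List Loc → Ctx Op Con → List (Expr Op Con) → Ctx Op Con
  | con : Con → List Loc → Ctx Op Con → List (Expr Op Con) → Ctx Op Con

/-- Plugging an expression into the hole of an evaluation context. -/
def Ctx.plug {Op Con : Type} : Ctx Op Con → Expr Op Con → Expr Op Con
  | .hole, e => e
  | .marked f ls E, e => .marked f ls (E.plug e)
  | .op f ls E es, e => .op f (ls.map Expr.loc ++ E.plug e :: es)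
  | .con c ls E es, e => .con c (ls.map Expr.loc ++ E.plug e :: es)

/-- A cache over locations. -/
abbrev HCache (Op : Type) := Set (Op × List Loc × Loc)

/-- Configurations: a cache, a heap and an expression. -/
abbrev Config (Op Con : Type) := HCache Op × Heap Con × Expr Op Con

/-- Instantiation of a term by a substitution mapping variables to locations,
yielding an expression. -/
def instE {Op Con V : Type} (σ : V → Loc) : Tm Op Con V → Expr Op Con
  | .var x => .loc (σ x)
  | .op f ts => .op f (ts.attach.map fun t => instE σ t.1)
  | .con c ts => .con c (ts.attach.map fun t => instE σ t.1)
decreasing_by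
  all_goals simp_wf
  all_goals (have := List.sizeOf_lt_of_mem t.2; omega)

/-- `PMatch h σ p l`: the pattern `p` matches the value stored at location `l` of the
heap `h`, binding the variables of `p` to locations according to `σ`.  This captures
matching via a homomorphism from the canonical tree of `p` into the heap, `σ` being the
induced substitution. -/
inductive PMatch {Op Con V : Type} (h : Heap Con) (σ : V → Loc) : Tm Op Con V → Loc → Prop
  | var {x l} : σ x = l → PMatch h σ (.var x) l
  | con {c : Con} {ps l ls} : h l = some (c, ls) → ps.length = ls.length →
      (∀ (i : ℕ) p l', ps[i]? = some p → ls[i]? = some l' → PMatch h σ p l') →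
      PMatch h σ (.con c ps) l

/-! ### Small-step semantics with memoization and sharing (Figure 6) -/

/-- The (apply) step. -/
inductive ApplyStep {Op Con V : Type} (P : Prog Op Con V) : Config Op Con → Config Op Con → Prop
  | mk {C : HCache Op} {h : Heap Con} {E : Ctx Op Con} {f ls r σ} :
      (∀ l, (f, ls, l) ∉ C) →
      r ∈ P.rules → r.lhsOp = f →
      r.lhsArgs.length = ls.length →
      (∀ (i : ℕ) p l, r.lhsArgs[i]? = some p → ls[i]? = some l → PMatch h σ p l) →
      ApplyStep P (C, h, E.plug (.op f (ls.map Expr.loc)))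
        (C, h, E.plug (.marked f ls (instE σ r.rhs)))

/-- The (read) step. -/
inductive ReadStep {Op Con : Type} : Config Op Con → Config Op Con → Prop
  | mk {C : HCache Op} {h : Heap Con} {E : Ctx Op Con} {f ls l} :
      (f, ls, l) ∈ C →
      ReadStep (C, h, E.plug (.op f (ls.map Expr.loc))) (C, h, E.plug (.loc l))

/-- The (store) step. -/
inductive StoreStep {Op Con : Type} : Config Op Con → Config Op Con → Prop
  | mk {C : HCache Op} {h : Heap Con} {E : Ctx Op Con} {f ls l} :
      StoreStep (C, h, E.plug (.marked f ls (.loc l)))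
        (insert (f, ls, l) C, h, E.plug (.loc l))

/-- The (merge) step. -/
inductive MergeStep {Op Con : Type} : Config Op Con → Config Op Con → Prop
  | mk {C : HCache Op} {h h' : Heap Con} {E : Ctx Op Con} {c ls l} :
      Merge h c ls h' l →
      MergeStep (C, h, E.plug (.con c (ls.map Expr.loc))) (C, h', E.plug (.loc l))

/-- `→sm`: read, store or merge. -/
def SmStep {Op Con : Type} : Config Op Con → Config Op Con → Prop :=
  fun a b => ReadStep a b ∨ StoreStep a b ∨ MergeStep a b

/-- `⇒`: apply, read, store or merge. -/
def Step {Op Con V : Type} (P : Prog Op Con V) : Config Op Con → Config Op Con → Prop :=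
  fun a b => ApplyStep P a b ∨ SmStep a b

/-- n-fold composition of `⇒`. -/
def StepN {Op Con V : Type} (P : Prog Op Con V) : ℕ → Config Op Con → Config Op Con → Prop
  | 0 => fun a b => a = b
  | n + 1 => fun a c => ∃ b, Step P a b ∧ StepN P n b c

/-- `→sm*`. -/
def SmSteps {Op Con : Type} : Config Op Con → Config Op Con → Prop :=
  Relation.ReflTransGen SmStep

/-- `⇛ = →sm* · ⇀ · →sm*`. -/
def MacroStep {Op Con V : Type} (P : Prog Op Con V) : Config Op Con → Config Op Con → Prop :=
  fun a d => ∃ b c, SmSteps a b ∧ ApplyStep P b c ∧ SmSteps c d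

/-- `⇛^m`, the m-fold composition of `⇛`: a reduction containing exactly `m` apply steps. -/
def MacroStepN {Op Con V : Type} (P : Prog Op Con V) : ℕ → Config Op Con → Config Op Con → Prop
  | 0 => fun a b => a = b
  | n + 1 => fun a c => ∃ b, MacroStep P a b ∧ MacroStepN P n b c

/-! ### Well-formed configurations -/

/-- A marker `f⟨ℓ⃗⟩{·}` occurs somewhere in the given expression. -/
inductive MarkedIn {Op Con : Type} (f : Op) (ls : List Loc) : Expr Op Con → Prop
  | here {e} : MarkedIn f ls (.marked f ls e)
  | op {g es e} : e ∈ es → MarkedIn f ls e → MarkedIn f ls (.op g es)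
  | con {c es e} : e ∈ es → MarkedIn f ls e → MarkedIn f ls (.con c es)
  | marked {g ls' e} : MarkedIn f ls e → MarkedIn f ls (.marked g ls' e)

/-- The location `l` occurs in the given expression. -/
inductive LocInExpr {Op Con : Type} (l : Loc) : Expr Op Con → Prop
  | loc : LocInExpr l (.loc l)
  | op {f es e} : e ∈ es → LocInExpr l e → LocInExpr l (.op f es)
  | con {c es e} : e ∈ es → LocInExpr l e → LocInExpr l (.con c es)
  | markedArg {f ls e} : l ∈ ls → LocInExpr l (.marked f ls e)
  | markedBody {f ls e} : LocInExpr l e → LocInExpr l (.marked f ls e)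

/-- Well-formed configurations: the heap is a maximally shared term graph, the cache is a
function compatible with the expression, and there are no dangling locations. -/
def WF {Op Con : Type} (cfg : Config Op Con) : Prop :=
  MaxShared cfg.2.1 ∧ HeapClosed cfg.2.1 ∧
  (∀ f ls l1 l2, (f, ls, l1) ∈ cfg.1 → (f, ls, l2) ∈ cfg.1 → l1 = l2) ∧
  (∀ f ls, MarkedIn f ls cfg.2.2 → ∀ l, (f, ls, l) ∉ cfg.1) ∧
  (∀ f ls l, (f, ls, l) ∈ cfg.1 → l ∈ heapDom cfg.2.1 ∧ ∀ l' ∈ ls, l' ∈ heapDom cfg.2.1) ∧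
  (∀ l, LocInExpr l cfg.2.2 → l ∈ heapDom cfg.2.1)

/-! ### Unfolding of expressions and caches -/

/-- `EUnfolds h e t`: the term `t = [e]_h` is obtained from `e` by following pointers to
the heap and erasing markers. -/
inductive EUnfolds {Op Con V : Type} (h : Heap Con) : Expr Op Con → Tm Op Con V → Prop
  | loc {l t} : HUnfolds h l t → EUnfolds h (.loc l) t
  | op {f : Op} {es ts} : es.length = ts.length →
      (∀ (i : ℕ) e t, es[i]? = some e → ts[i]? = some t → EUnfolds h e t) →
      EUnfolds h (.op f es) (.op f ts)
  | con {c : Con} {es ts} : es.length = ts.length →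
      (∀ (i : ℕ) e t, es[i]? = some e → ts[i]? = some t → EUnfolds h e t) →
      EUnfolds h (.con c es) (.con c ts)
  | marked {f ls e t} : EUnfolds h e t → EUnfolds h (.marked f ls e) t

/-- `[C]_h`: the unfolding of a location cache into a term cache. -/
def cacheUnfold {Op Con : Type} (V : Type) (h : Heap Con) (C : HCache Op) :
    TCache Op Con V :=
  {x | ∃ ls l, (x.1, ls, l) ∈ C ∧ ls.length = x.2.1.length ∧
    (∀ (i : ℕ) l' t, ls[i]? = some l' → x.2.1[i]? = some t → HUnfolds h l' t) ∧
    HUnfolds h l x.2.2}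

/-- An initial configuration: empty cache, maximally shared heap without dangling
locations, and an expression `f(v₁,…,vₖ)` whose arguments are value expressions. -/
def InitialConf {Op Con : Type} (h : Heap Con) (e : Expr Op Con) : Prop :=
  MaxShared h ∧ HeapClosed h ∧ (∀ l, LocInExpr l e → l ∈ heapDom h) ∧
  ∃ (f : Op) (es : List (Expr Op Con)), e = .op f es ∧ ∀ e' ∈ es, IsValExpr e'

/-! ### Sizes and weights -/

/-- The size `|e|` of an expression: every symbol and location counts one. -/
def exprSize {Op Con : Type} : Expr Op Con → ℕ
  | .loc _ => 1
  | .op _ es => 1 + (es.attach.map fun e => exprSize e.1).sum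
  | .con _ es => 1 + (es.attach.map fun e => exprSize e.1).sum
  | .marked _ _ e => 1 + exprSize e
decreasing_by
  all_goals simp_wf
  all_goals (have := List.sizeOf_lt_of_mem e.2; omega)

/-- The weight `‖e‖` of an expression: like the size, but locations count zero. -/
def weight {Op Con : Type} : Expr Op Con → ℕ
  | .loc _ => 0
  | .op _ es => 1 + (es.attach.map fun e => weight e.1).sum
  | .con _ es => 1 + (es.attach.map fun e => weight e.1).sum
  | .marked _ _ e => 1 + weight e
decreasing_by
  all_goals simp_wf
  all_goals (have := List.sizeOf_lt_of_mem e.2; omega)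

/-- `Δ`, the maximal size of a right-hand side of the program. -/
def progDelta {Op Con V : Type} (P : Prog Op Con V) : ℕ :=
  (P.rules.map fun r => r.rhs.size).foldr max 1

/-- The size of a configuration: cardinality of the cache plus number of heap nodes plus
size of the expression. -/
noncomputable def confSize {Op Con : Type} (cfg : Config Op Con) : ℕ :=
  cfg.1.ncard + (heapDom cfg.2.1).ncard + exprSize cfg.2.2

open Classical in
/-- The number of apply steps along a list of configurations. -/
noncomputable def applyCount {Op Con V : Type} (P : Prog Op Con V) :
    List (Config Op Con) → ℕ
  | [] => 0
  | [_] => 0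
  | a :: b :: rest => (if ApplyStep P a b then 1 else 0) + applyCount P (b :: rest)

end Memo

namespace Memo

/-!
Apart from (merge) with a fresh location, a step leaves the heap untouched, and a fresh merge
only writes at a location outside the old heap. Because the old heap is closed, unfolding from
an old location never leaves it, so it cannot see the new node; well-formedness puts every
location of the cache and of the expression in the old heap.
-/

variable {Op Con V : Type}

theorem Merge.eqOn_heapDom {h h' : Heap Con} {c : Con} {ls : List Loc} {l : Loc}
    (hm : Merge h c ls h' l) : Set.EqOn h' h (heapDom h) := by
  cases hm with
  | reuse _ => exact Set.eqOn_refl _ _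
  | fresh _ hnone _ =>
    intro l' hl'
    exact Function.update_of_ne (by rintro rfl; exact hl' hnone) _ _

theorem Step.eqOn_heapDom {P : Prog Op Con V} {C1 C2 : HCache Op} {h1 h2 : Heap Con}
    {e1 e2 : Expr Op Con} (hstep : Step P (C1, h1, e1) (C2, h2, e2)) :
    Set.EqOn h2 h1 (heapDom h1) := by
  rcases hstep with ha | hr | hs | hm
  · cases ha; exact Set.eqOn_refl _ _
  · cases hr; exact Set.eqOn_refl _ _
  · cases hs; exact Set.eqOn_refl _ _
  · obtain ⟨hmerge⟩ := hm; exact hmerge.eqOn_heapDom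

theorem HUnfolds.of_eqOn_heapDom {h1 h2 : Heap Con} (hag : Set.EqOn h2 h1 (heapDom h1))
    {l : Loc} {v : Tm Op Con V} (hu : HUnfolds h1 l v) : HUnfolds h2 l v := by
  induction hu with
  | mk hl hlen _ ih =>
    exact .mk ((hag (by simp [heapDom, hl])).trans hl) hlen ih

theorem HUnfolds.of_eqOn_heapDom_of_heapClosed {h1 h2 : Heap Con} (hcl : HeapClosed h1)
    (hag : Set.EqOn h2 h1 (heapDom h1)) {l : Loc} {v : Tm Op Con V} (hu : HUnfolds h2 l v)
    (hl : l ∈ heapDom h1) : HUnfolds h1 l v := by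
  induction hu with
  | @mk l c ls ts hl2 hlen _ ih =>
    have hl1 : h1 l = some (c, ls) := (hag hl).symm.trans hl2
    exact .mk hl1 hlen fun i l' t hi ht =>
      ih i l' t hi ht (hcl l c ls hl1 l' (List.mem_of_getElem? hi))

theorem hunfolds_iff_of_eqOn_heapDom {h1 h2 : Heap Con} (hcl : HeapClosed h1)
    (hag : Set.EqOn h2 h1 (heapDom h1)) {l : Loc} (hl : l ∈ heapDom h1) (v : Tm Op Con V) :
    HUnfolds h2 l v ↔ HUnfolds h1 l v :=
  ⟨fun hu => hu.of_eqOn_heapDom_of_heapClosed hcl hag hl, HUnfolds.of_eqOn_heapDom hag⟩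

theorem EUnfolds.of_hunfolds_imp {h1 h2 : Heap Con} {e : Expr Op Con} {t : Tm Op Con V}
    (hu : EUnfolds h2 e t)
    (H : ∀ l, LocInExpr l e → ∀ v : Tm Op Con V, HUnfolds h2 l v → HUnfolds h1 l v) :
    EUnfolds h1 e t := by
  induction hu with
  | loc hl => exact .loc (H _ .loc _ hl)
  | op hlen _ ih =>
    exact .op hlen fun i e t hi ht =>
      ih i e t hi ht fun l hl => H l (.op (List.mem_of_getElem? hi) hl)
  | con hlen _ ih =>
    exact .con hlen fun i e t hi ht =>
      ih i e t hi ht fun l hl => H l (.con (List.mem_of_getElem? hi) hl)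
  | marked _ ih => exact .marked (ih fun l hl => H l (.markedBody hl))

theorem eunfolds_iff_of_hunfolds_iff {h1 h2 : Heap Con} {e : Expr Op Con}
    (H : ∀ l, LocInExpr l e → ∀ v : Tm Op Con V, HUnfolds h2 l v ↔ HUnfolds h1 l v)
    (t : Tm Op Con V) : EUnfolds h2 e t ↔ EUnfolds h1 e t :=
  ⟨fun hu => hu.of_hunfolds_imp fun l hl v => (H l hl v).mp,
    fun hu => hu.of_hunfolds_imp fun l hl v => (H l hl v).mpr⟩

theorem cacheUnfold_eq_of_hunfolds_iff {h1 h2 : Heap Con} {C : HCache Op}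
    (H : ∀ f ls l, (f, ls, l) ∈ C → ∀ l' ∈ l :: ls, ∀ v : Tm Op Con V,
      HUnfolds h2 l' v ↔ HUnfolds h1 l' v) :
    cacheUnfold V h2 C = cacheUnfold V h1 C := by
  ext ⟨f, ts, v⟩
  simp only [cacheUnfold, Set.mem_ofPred_eq]
  refine exists₂_congr fun ls l => and_congr_right fun hin => and_congr_right fun _ => ?_
  have harg : ∀ i l', ls[i]? = some l' → l' ∈ l :: ls :=
    fun i l' hi => List.mem_cons_of_mem l (List.mem_of_getElem? hi)
  exact and_congr
    (forall₄_congr fun i l' t hi => imp_congr_right fun _ => H f ls l hin l' (harg i l' hi) t)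
    (H f ls l hin l List.mem_cons_self v)

/-- Lemma 8.  Along `⇒`-steps the heap is monotonically increasing:
(1) the value stored at any location of the original heap is unchanged, and
(2) the unfoldings of the original cache and expression are preserved. -/
theorem statement6 {Op Con V : Type} [DecidableEq V] (P : Prog Op Con V)
    (hP : Orthogonal P) (C1 C2 : HCache Op) (h1 h2 : Heap Con) (e1 e2 : Expr Op Con)
    (hstep : Step P (C1, h1, e1) (C2, h2, e2)) (hwf : WF (C1, h1, e1)) :
    (∀ l ∈ heapDom h1, ∀ v : Tm Op Con V, HUnfolds h2 l v ↔ HUnfolds h1 l v) ∧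
    cacheUnfold V h2 C1 = cacheUnfold V h1 C1 ∧
    (∀ t : Tm Op Con V, EUnfolds h2 e1 t ↔ EUnfolds h1 e1 t) := by
  obtain ⟨-, hclosed, -, -, hcache_dom, hexpr_dom⟩ := hwf
  have heap_iff : ∀ l ∈ heapDom h1, ∀ v : Tm Op Con V, HUnfolds h2 l v ↔ HUnfolds h1 l v :=
    fun l hl => hunfolds_iff_of_eqOn_heapDom hclosed (Step.eqOn_heapDom hstep) hl
  refine ⟨heap_iff, ?_, eunfolds_iff_of_hunfolds_iff fun l hl => heap_iff l (hexpr_dom l hl)⟩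
  refine cacheUnfold_eq_of_hunfolds_iff fun f ls l hin l' hl' => heap_iff l' ?_
  obtain ⟨hl, hls⟩ := hcache_dom f ls l hin
  rcases List.mem_cons.mp hl' with rfl | hl'
  exacts [hl, hls l' hl']

end Memo
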